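/- arXiv:2407.07119 — 6 statements merged into one kernel-verified Lean document; each statement's English description precedes it below -/
import Mathlib

section
/- For a finite irreducible Markov chain on states {1,...,N} with transition probabilities e°_{ij} (e°_{ij} ≥ 0, ∑_j e°_{ij} may be sub-stochastic but the chain of swaps is irreducible), the system of equations ∑_j e°_{ij} v_j = ∑_j e°_{ji} v_i for all i, together with the normalization ∑_i v_i = 1, has a unique solution v (the reproductive values), and this solution satisfies v_i > 0 for all i. -/
/-!
Let `L = balanceMatrix e`, so that `(L w) i = ∑ⱼ e i j * w j - ∑ⱼ e j i * w i` and the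
reproductive-value vectors are the kernel vectors of `L` with coordinate sum one. The coordinates
of `L w` always sum to zero, so `L` is singular. For a kernel vector `w`, its positive part `w⁺`
has `L w⁺ ≥ 0` coordinatewise, hence `L w⁺ = 0`; and a nonnegative kernel vector vanishing at one
state vanishes at every state reachable from it. By irreducibility every kernel vector thus has
constant sign, and a nonzero one has no zero coordinate. Normalizing a nonzero kernel vector gives
existence; uniqueness holds because a kernel vector of constant sign with coordinate sum zero
vanishes.
-/

open Finset Matrix

namespace ReproductiveValue

variable {ι R : Type*} [Fintype ι] [CommRing R]

def IsBalanced (e : ι → ι → R) (v : ι → R) : Prop :=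
  ∀ i, ∑ j, e i j * v j = ∑ j, e j i * v i

def balanceMatrix [DecidableEq ι] (e : ι → ι → R) : Matrix ι ι R :=
  Matrix.of e - diagonal fun i => ∑ j, e j i

section Matrix

variable [DecidableEq ι] (e : ι → ι → R)

theorem balanceMatrix_mulVec_apply (w : ι → R) (i : ι) :
    (balanceMatrix e *ᵥ w) i = ∑ j, e i j * w j - ∑ j, e j i * w i := by
  simp only [balanceMatrix, sub_mulVec, Pi.sub_apply, mulVec_diagonal, sum_mul]
  rfl

theorem isBalanced_iff_balanceMatrix_mulVec_eq_zero (w : ι → R) :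
    IsBalanced e w ↔ balanceMatrix e *ᵥ w = 0 := by
  simp only [IsBalanced, funext_iff, balanceMatrix_mulVec_apply, Pi.zero_apply, sub_eq_zero]

theorem one_vecMul_balanceMatrix : 1 ᵥ* balanceMatrix e = 0 := by
  ext j
  simp only [balanceMatrix, vecMul_sub, Pi.sub_apply, vecMul_diagonal, Pi.one_apply, one_mul,
    Pi.zero_apply, sub_eq_zero]
  simp [vecMul, dotProduct]

theorem sum_balanceMatrix_mulVec (w : ι → R) : ∑ i, (balanceMatrix e *ᵥ w) i = 0 := by
  simpa [dotProduct, one_vecMul_balanceMatrix] using dotProduct_mulVec 1 (balanceMatrix e) w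

theorem det_balanceMatrix [Nonempty ι] [IsDomain R] : (balanceMatrix e).det = 0 :=
  exists_vecMul_eq_zero_iff.mp ⟨1, one_ne_zero, one_vecMul_balanceMatrix e⟩

end Matrix

theorem exists_isBalanced_ne_zero [Nonempty ι] [IsDomain R] (e : ι → ι → R) :
    ∃ w ≠ 0, IsBalanced e w := by
  classical
  obtain ⟨w, hw, hker⟩ := exists_mulVec_eq_zero_iff.mpr (det_balanceMatrix e)
  exact ⟨w, hw, (isBalanced_iff_balanceMatrix_mulVec_eq_zero e w).mpr hker⟩

namespace IsBalanced

variable {e : ι → ι → R} {v w : ι → R}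

theorem neg (hv : IsBalanced e v) : IsBalanced e (-v) := fun i => by
  simp only [Pi.neg_apply, mul_neg, sum_neg_distrib, hv i]

theorem sub (hv : IsBalanced e v) (hw : IsBalanced e w) : IsBalanced e (v - w) := fun i => by
  simp only [Pi.sub_apply, mul_sub, sum_sub_distrib, hv i, hw i]

theorem smul (hv : IsBalanced e v) (c : R) : IsBalanced e (c • v) := fun i => by
  simp only [Pi.smul_apply, smul_eq_mul, mul_left_comm _ c, ← mul_sum, hv i]

variable [LinearOrder R] [IsStrictOrderedRing R]

theorem eq_zero_of_reflTransGen (he : ∀ i j, 0 ≤ e i j) (hv : IsBalanced e v)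
    (hv0 : ∀ i, 0 ≤ v i) {i j : ι} (hij : Relation.ReflTransGen (fun a b => 0 < e a b) i j)
    (hi : v i = 0) : v j = 0 := by
  induction hij with
  | refl => exact hi
  | @tail b c _ hbc ih =>
    have hout : ∑ k, e b k * v k = 0 := by simp [hv b, ih]
    have := (sum_eq_zero_iff_of_nonneg fun k _ => mul_nonneg (he b k) (hv0 k)).mp hout c
      (mem_univ c)
    exact (mul_eq_zero.mp this).resolve_left hbc.ne'

theorem pos_of_nonneg (he : ∀ i j, 0 ≤ e i j)
    (hirr : ∀ i j, Relation.ReflTransGen (fun a b => 0 < e a b) i j) (hv : IsBalanced e v)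
    (hv0 : ∀ i, 0 ≤ v i) (hne : v ≠ 0) (i : ι) : 0 < v i := by
  obtain ⟨k, hk⟩ := Function.ne_iff.mp hne
  exact (hv0 i).lt_of_ne fun hi => hk (hv.eq_zero_of_reflTransGen he hv0 (hirr i k) hi.symm)

theorem max_zero (he : ∀ i j, 0 ≤ e i j) (hv : IsBalanced e v) :
    IsBalanced e (fun i => max (v i) 0) := by
  classical
  set v' : ι → R := fun i => max (v i) 0
  have hdefect (i : ι) : 0 ≤ (balanceMatrix e *ᵥ v') i := by
    rw [balanceMatrix_mulVec_apply]
    rcases le_or_gt (v i) 0 with h | h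
    · have : v' i = 0 := max_eq_right h
      simp only [this, mul_zero, sum_const_zero, sub_zero]
      exact sum_nonneg fun j _ => mul_nonneg (he i j) (le_max_right _ _)
    · have : v' i = v i := max_eq_left h.le
      rw [this, ← hv i, ← sum_sub_distrib]
      refine sum_nonneg fun j _ => ?_
      rw [← mul_sub]
      exact mul_nonneg (he i j) (sub_nonneg.mpr (le_max_left _ _))
  rw [isBalanced_iff_balanceMatrix_mulVec_eq_zero]
  ext i
  exact (sum_eq_zero_iff_of_nonneg fun i _ => hdefect i).mp (sum_balanceMatrix_mulVec e v') i
    (mem_univ i)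

variable (he : ∀ i j, 0 ≤ e i j)
  (hirr : ∀ i j, Relation.ReflTransGen (fun a b => 0 < e a b) i j)
include he hirr

theorem nonneg_or_nonpos (hv : IsBalanced e v) : (∀ i, 0 ≤ v i) ∨ ∀ i, v i ≤ 0 := by
  by_cases hzero : (fun i => max (v i) 0) = 0
  · exact .inr fun i => max_eq_right_iff.mp (congrFun hzero i)
  · have hpos := (hv.max_zero he).pos_of_nonneg he hirr (fun i => le_max_right _ _) hzero
    exact .inl fun i => (lt_max_iff.mp (hpos i)).resolve_right (lt_irrefl 0) |>.le

theorem eq_zero_of_sum_eq_zero (hv : IsBalanced e v) (hsum : ∑ i, v i = 0) : v = 0 := by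
  funext i
  rcases hv.nonneg_or_nonpos he hirr with h | h
  · exact (sum_eq_zero_iff_of_nonneg fun i _ => h i).mp hsum i (mem_univ i)
  · exact (sum_eq_zero_iff_of_nonpos fun i _ => h i).mp hsum i (mem_univ i)

end IsBalanced

theorem exists_isBalanced_pos [Nonempty ι] [LinearOrder R] [IsStrictOrderedRing R]
    {e : ι → ι → R} (he : ∀ i j, 0 ≤ e i j)
    (hirr : ∀ i j, Relation.ReflTransGen (fun a b => 0 < e a b) i j) :
    ∃ v, IsBalanced e v ∧ ∀ i, 0 < v i := by
  obtain ⟨w, hw, hbal⟩ := exists_isBalanced_ne_zero e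
  rcases hbal.nonneg_or_nonpos he hirr with h | h
  · exact ⟨w, hbal, hbal.pos_of_nonneg he hirr h hw⟩
  · exact ⟨-w, hbal.neg, hbal.neg.pos_of_nonneg he hirr (fun i => neg_nonneg.mpr (h i))
      (neg_ne_zero.mpr hw)⟩

end ReproductiveValue

open ReproductiveValue in
/-- For a finite irreducible nonnegative rate matrix `e°` on `Fin N`,
the reproductive-value system `∑_j e°_{ij} v_j = ∑_j e°_{ji} v_i` (for all `i`)
together with `∑_i v_i = 1` has a unique solution, and it is strictly positive. -/
theorem reproductive_values_exist_unique_pos (N : ℕ) (hN : 1 ≤ N)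
    (e : Fin N → Fin N → ℝ) (he0 : ∀ i j, 0 ≤ e i j)
    (hirr : ∀ i j : Fin N, Relation.ReflTransGen (fun a b => 0 < e a b) i j) :
    ∃ v : Fin N → ℝ,
      ((∀ i, ∑ j, e i j * v j = ∑ j, e j i * v i) ∧ ∑ i, v i = 1) ∧
      (∀ i, 0 < v i) ∧
      ∀ w : Fin N → ℝ,
        ((∀ i, ∑ j, e i j * w j = ∑ j, e j i * w i) ∧ ∑ i, w i = 1) → w = v := by
  have : Nonempty (Fin N) := ⟨⟨0, hN⟩⟩
  obtain ⟨u, hbal, hpos⟩ := exists_isBalanced_pos he0 hirr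
  have hsum : 0 < ∑ i, u i := sum_pos (fun i _ => hpos i) univ_nonempty
  set v := (∑ i, u i)⁻¹ • u
  have hv : IsBalanced e v := hbal.smul _
  have hvsum : ∑ i, v i = 1 := by
    simp only [v, Pi.smul_apply, smul_eq_mul, ← mul_sum, inv_mul_cancel₀ hsum.ne']
  refine ⟨v, ⟨hv, hvsum⟩, fun i => mul_pos (inv_pos.mpr hsum) (hpos i), fun w ⟨hw, hwsum⟩ => ?_⟩
  refine sub_eq_zero.mp ((IsBalanced.sub hw hv).eq_zero_of_sum_eq_zero he0 hirr ?_)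
  simp only [Pi.sub_apply, sum_sub_distrib, hwsum, hvsum, sub_self]
end

section
/- For the RV-weighted frequency ŝ = ∑_i v_i s_i, the one-step expected change under neutral drift is zero: if the state updates by copying, s'_i = s_{f(i)} for i in the update set Q and s'_i = s_i otherwise, and replacement events occur with neutral probabilities, then E[ŝ' − ŝ | s] = ∑_i v_i ∑_j (s_j − s_i) e°_{ji}(s) = 0 for all states s. Hence (ŝ_t) is a martingale under neutral drift. -/
/-!
Swapping the order of summation rewrites the expected change of `ŝ` as
`∑ j, s j * (∑ i, e j i * v i - ∑ i, e i j * v j)`: the reproductive value that site `j`'s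
strategy gains by being copied minus what it loses by copying others. The defining balance
equation of `v` says exactly that each bracket vanishes, whatever the state `s`.
-/

open Finset

section Drift

variable {ι R : Type*} [Fintype ι] [CommRing R]

theorem sum_mul_sum_sub_mul_eq (e : ι → ι → R) (v s : ι → R) :
    ∑ i, v i * ∑ j, (s j - s i) * e j i
      = ∑ j, s j * (∑ i, e j i * v i - ∑ i, e i j * v j) := by
  simp only [mul_sum, sub_mul, mul_sub, sum_sub_distrib]
  rw [sum_comm (f := fun i j => v i * (s j * e j i))]
  congr 1 <;> exact sum_congr rfl fun _ _ => sum_congr rfl fun _ _ => by ring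

theorem sum_mul_sum_sub_mul_eq_zero_of_balance {e : ι → ι → R} {v : ι → R}
    (hbal : ∀ i, ∑ j, e i j * v j = ∑ j, e j i * v i) (s : ι → R) :
    ∑ i, v i * ∑ j, (s j - s i) * e j i = 0 := by
  rw [sum_mul_sum_sub_mul_eq]
  exact sum_eq_zero fun j _ => by rw [hbal j, sub_self, mul_zero]

end Drift

theorem neutral_rv_weighted_frequency_martingale_general (N : ℕ)
    (e : Fin N → Fin N → ℝ) (v : Fin N → ℝ)
    (hbal : ∀ i, ∑ j, e i j * v j = ∑ j, e j i * v i) :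
    ∀ s : Fin N → ℝ, (∀ k, s k = 0 ∨ s k = 1) →
      ∑ i, v i * ∑ j, (s j - s i) * e j i = 0 :=
  fun s _ => sum_mul_sum_sub_mul_eq_zero_of_balance hbal s

/-- Under neutral drift, the one-step expected change of the
RV-weighted frequency `ŝ = ∑ i, v i * s i` is zero in every state:
`∑ i, v i * ∑ j, (s j − s i) * e°_{ji} = 0`, so `(ŝ_t)` is a martingale. -/
theorem neutral_rv_weighted_frequency_martingale (N : ℕ)
    (e : Fin N → Fin N → ℝ) (v : Fin N → ℝ)
    (hbal : ∀ i, ∑ j, e i j * v j = ∑ j, e j i * v i)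
    (hv : ∑ i, v i = 1) :
    ∀ s : Fin N → ℝ, (∀ k, s k = 0 ∨ s k = 1) →
      ∑ i, v i * ∑ j, (s j - s i) * e j i = 0 :=
  neutral_rv_weighted_frequency_martingale_general N e v hbal
end

section
/- With the amended Markov chain P^{ame(η)} as above, let π_{ame(η)} denote its unique stationary distribution. Then as μ → 0⁺, π_{ame(η)}(s) converges to: the fixation probability ρ_{C×C}(η) if s = C×C; ρ_{C×D}(η) if s = C×D; ρ_{D×C}(η) if s = D×C; ρ_{D×D}(η) if s = D×D; and 0 for every other state s. Here ρ_A(η) is the probability that the original chain started at η is absorbed in state A. -/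
/-!
Pairing the stationarity equation `π = π P^{ame(η)}` with any `f` gives
`∑_{s ∉ A} π(s) (f - P f)(s) = μ (f(η) π(A) - ∑_{a ∈ A} π(a) f(a))`.
For the absorption probability `f = ρ_a`, harmonic off `A`, the left side vanishes and
`π(a) = ρ_a(η) π(A)`. For the expected absorption time `f = h` (`h = 0` on `A`, `h = 1 + P h`
off `A`) it reads `π(Aᶜ) = μ h(η) π(A) ≤ μ |h(η)|`. So `π(Aᶜ) → 0`, `π(A) → 1` and
`π(a) → ρ_a(η)`. The absorption time exists because the Dirichlet problem off `A` has at most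
one solution: a positive maximum of a function harmonic off `A` and zero on `A` would propagate
along the chain to a state of `A`.
-/

open Finset Matrix Filter Topology

section MarkovChain

variable {S : Type*} [Fintype S]

lemma eq_of_sum_mul_eq_of_le {w x : S → ℝ} {m : ℝ} (hw : ∀ t, 0 ≤ w t) (hw1 : ∑ t, w t = 1)
    (hx : ∀ t, x t ≤ m) (hsum : ∑ t, w t * x t = m) {t : S} (ht : w t ≠ 0) : x t = m := by
  have hgap : ∑ u, w u * (m - x u) = 0 := by
    simp only [mul_sub, sum_sub_distrib, ← sum_mul, hw1, hsum, one_mul, sub_self]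
  have := (sum_eq_zero_iff_of_nonneg fun u _ => mul_nonneg (hw u) (sub_nonneg.2 (hx u))).1
    hgap t (mem_univ t)
  linarith [(mul_eq_zero.1 this).resolve_left ht]

variable [DecidableEq S]

section Dirichlet

variable {P : Matrix S S ℝ} {A : Finset S}

lemma eq_max_of_pow_apply_ne_zero (hP : P ∈ rowStochastic ℝ S) {x : S → ℝ}
    (hA : ∀ a ∈ A, x a = 0) (hx : ∀ s ∉ A, x s = (P *ᵥ x) s) {s₀ : S}
    (hmax : ∀ s, x s ≤ x s₀) (hpos : 0 < x s₀) :
    ∀ n t, (P ^ n) s₀ t ≠ 0 → x t = x s₀ := by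
  intro n
  induction n with
  | zero =>
    intro t ht
    obtain rfl : s₀ = t := by_contra fun h => ht (by rw [pow_zero, one_apply_ne h])
    rfl
  | succ n ih =>
    intro t ht
    rw [pow_succ, mul_apply] at ht
    obtain ⟨u, -, hu⟩ := exists_ne_zero_of_sum_ne_zero ht
    have hxu := ih u (left_ne_zero_of_mul hu)
    have huA : u ∉ A := fun h => by linarith [hA u h]
    exact eq_of_sum_mul_eq_of_le (fun t => hP.1 u t) (sum_row_of_mem_rowStochastic hP u) hmax
      ((hx u huA).symm.trans hxu) (right_ne_zero_of_mul hu)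

lemma le_zero_of_harmonic (hP : P ∈ rowStochastic ℝ S)
    (hreach : ∀ s ∉ A, ∃ a ∈ A, ∃ n, 0 < (P ^ n) s a) {x : S → ℝ}
    (hA : ∀ a ∈ A, x a = 0) (hx : ∀ s ∉ A, x s = (P *ᵥ x) s) (s : S) : x s ≤ 0 := by
  obtain ⟨s₀, -, hmax⟩ := exists_max_image univ x ⟨s, mem_univ s⟩
  by_contra! hs
  have hpos : 0 < x s₀ := hs.trans_le (hmax s (mem_univ s))
  have hs₀ : s₀ ∉ A := fun h => by linarith [hA s₀ h]
  obtain ⟨a, ha, n, hn⟩ := hreach s₀ hs₀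
  linarith [hA a ha,
    eq_max_of_pow_apply_ne_zero hP hA hx (fun t => hmax t (mem_univ t)) hpos n a hn.ne']

lemma eq_zero_of_harmonic (hP : P ∈ rowStochastic ℝ S)
    (hreach : ∀ s ∉ A, ∃ a ∈ A, ∃ n, 0 < (P ^ n) s a) {x : S → ℝ}
    (hA : ∀ a ∈ A, x a = 0) (hx : ∀ s ∉ A, x s = (P *ᵥ x) s) : x = 0 := by
  funext s
  have hneg := le_zero_of_harmonic hP hreach (x := -x) (fun a ha => by simp [hA a ha])
    (fun s hs => by rw [mulVec_neg, Pi.neg_apply, Pi.neg_apply, hx s hs]) s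
  exact le_antisymm (le_zero_of_harmonic hP hreach hA hx s) (by simpa using hneg)

def dirichletMatrix (P : Matrix S S ℝ) (A : Finset S) : Matrix S S ℝ :=
  1 - of fun s t => if s ∈ A then 0 else P s t

lemma dirichletMatrix_mulVec_apply (x : S → ℝ) (s : S) :
    (dirichletMatrix P A *ᵥ x) s = if s ∈ A then x s else x s - (P *ᵥ x) s := by
  rw [dirichletMatrix, sub_mulVec, one_mulVec, Pi.sub_apply]
  split_ifs with hs <;> simp [mulVec, dotProduct, hs]

lemma exists_dirichlet_solution (hP : P ∈ rowStochastic ℝ S)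
    (hreach : ∀ s ∉ A, ∃ a ∈ A, ∃ n, 0 < (P ^ n) s a) (g : S → ℝ) :
    ∃ h : S → ℝ, (∀ a ∈ A, h a = 0) ∧ ∀ s ∉ A, h s = g s + (P *ᵥ h) s := by
  have hinj : Function.Injective (dirichletMatrix P A).mulVec := by
    intro x y hxy
    have hz : dirichletMatrix P A *ᵥ (x - y) = 0 := by rw [mulVec_sub, hxy, sub_self]
    have hz s := congrFun hz s
    simp only [dirichletMatrix_mulVec_apply, Pi.zero_apply] at hz
    refine sub_eq_zero.1 (eq_zero_of_harmonic hP hreach (fun a ha => ?_) fun s hs => ?_)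
    · simpa [ha] using hz a
    · simpa [hs, sub_eq_zero] using hz s
  obtain ⟨h, hh⟩ := mulVec_surjective_iff_isUnit.2 (mulVec_injective_iff_isUnit.1 hinj)
    fun s => if s ∈ A then 0 else g s
  have hh s := congrFun hh s
  simp only [dirichletMatrix_mulVec_apply] at hh
  refine ⟨h, fun a ha => by simpa [ha] using hh a, fun s hs => ?_⟩
  have := hh s
  simp only [if_neg hs] at this
  linarith

end Dirichlet

section AmendedChain

variable {P : Matrix S S ℝ} {A : Finset S} {η : S} {μ : ℝ}

/-- The amended chain `P^{ame(η)}`. -/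
def amendedMatrix (P : Matrix S S ℝ) (A : Finset S) (η : S) (μ : ℝ) : Matrix S S ℝ :=
  of fun s t => if s ∈ A then (if t = η then μ else if t = s then 1 - μ else 0) else P s t

def IsStationaryDistribution (K : Matrix S S ℝ) (p : S → ℝ) : Prop :=
  (∀ s, 0 ≤ p s) ∧ ∑ s, p s = 1 ∧ p ᵥ* K = p

lemma amendedMatrix_mulVec_of_mem (hη : η ∉ A) {a : S} (ha : a ∈ A) (f : S → ℝ) :
    (amendedMatrix P A η μ *ᵥ f) a = μ * f η + (1 - μ) * f a := by
  have haη : a ≠ η := fun h => hη (h ▸ ha)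
  simp [amendedMatrix, mulVec, dotProduct, ha, ite_mul, sum_ite, filter_eq', haη]

lemma amendedMatrix_mulVec_of_notMem {s : S} (hs : s ∉ A) (f : S → ℝ) :
    (amendedMatrix P A η μ *ᵥ f) s = (P *ᵥ f) s := by
  simp [amendedMatrix, mulVec, dotProduct, hs]

/-- Pair `p = p ᵥ* K` with `f` (`p ⬝ᵥ f = p ⬝ᵥ K *ᵥ f`) and split off the absorbing rows. -/
lemma amended_balance (hη : η ∉ A) {p : S → ℝ} (hp : p ᵥ* amendedMatrix P A η μ = p)
    (f : S → ℝ) :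
    ∑ s ∈ Aᶜ, p s * (f s - (P *ᵥ f) s) = μ * (f η * ∑ a ∈ A, p a - ∑ a ∈ A, p a * f a) := by
  have h := dotProduct_mulVec p (amendedMatrix P A η μ) f
  rw [hp, dotProduct, dotProduct, ← sum_add_sum_compl A, ← sum_add_sum_compl A] at h
  have hA : ∑ a ∈ A, p a * (amendedMatrix P A η μ *ᵥ f) a
      = μ * f η * ∑ a ∈ A, p a + ∑ a ∈ A, p a * f a - μ * ∑ a ∈ A, p a * f a := by
    rw [mul_sum, mul_sum, ← sum_add_distrib, ← sum_sub_distrib]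
    exact sum_congr rfl fun a ha => by rw [amendedMatrix_mulVec_of_mem hη ha]; ring
  have hAc : ∑ s ∈ Aᶜ, p s * (amendedMatrix P A η μ *ᵥ f) s = ∑ s ∈ Aᶜ, p s * (P *ᵥ f) s :=
    sum_congr rfl fun s hs => by rw [amendedMatrix_mulVec_of_notMem (mem_compl.1 hs)]
  simp only [mul_sub, sum_sub_distrib]
  linarith

lemma sum_mul_eq_of_harmonic (hη : η ∉ A) (hμ : μ ≠ 0) {p : S → ℝ}
    (hp : p ᵥ* amendedMatrix P A η μ = p) {f : S → ℝ} (hf : ∀ s ∉ A, f s = (P *ᵥ f) s) :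
    ∑ a ∈ A, p a * f a = f η * ∑ a ∈ A, p a := by
  have h := amended_balance hη hp f
  rw [sum_eq_zero fun s hs => by rw [← hf s (mem_compl.1 hs), sub_self, mul_zero]] at h
  linarith [(mul_eq_zero.1 h.symm).resolve_left hμ]

lemma sum_compl_eq_of_hitting_time (hη : η ∉ A) {p : S → ℝ}
    (hp : p ᵥ* amendedMatrix P A η μ = p) {h : S → ℝ} (hA : ∀ a ∈ A, h a = 0)
    (hh : ∀ s ∉ A, h s = 1 + (P *ᵥ h) s) :
    ∑ s ∈ Aᶜ, p s = μ * h η * ∑ a ∈ A, p a := by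
  have hbal := amended_balance hη hp h
  rw [sum_congr rfl fun s hs => by rw [show h s - (P *ᵥ h) s = 1 by
      linarith [hh s (mem_compl.1 hs)], mul_one]] at hbal
  have hA0 : ∑ a ∈ A, p a * h a = 0 := sum_eq_zero fun a ha => by rw [hA a ha, mul_zero]
  rw [hbal, hA0, sub_zero, mul_assoc]

end AmendedChain

section Limit

variable {P : Matrix S S ℝ} {A : Finset S} {η : S} {π : ℝ → S → ℝ}

lemma tendsto_sum_compl (hP : P ∈ rowStochastic ℝ S)
    (hreach : ∀ s ∉ A, ∃ a ∈ A, ∃ n, 0 < (P ^ n) s a) (hη : η ∉ A)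
    (hπ : ∀ μ ∈ Set.Ioo (0 : ℝ) 1, IsStationaryDistribution (amendedMatrix P A η μ) (π μ)) :
    Tendsto (fun μ => ∑ s ∈ Aᶜ, π μ s) (𝓝[>] 0) (𝓝 0) := by
  obtain ⟨h, hA, hh⟩ := exists_dirichlet_solution hP hreach fun _ => 1
  have hlim : Tendsto (fun μ : ℝ => μ * |h η|) (𝓝[>] 0) (𝓝 0) := by
    simpa using (tendsto_id.mul_const |h η|).mono_left (nhdsWithin_le_nhds (a := (0 : ℝ)))
  refine squeeze_zero' ?_ ?_ hlim <;> filter_upwards [Ioo_mem_nhdsGT one_pos] with μ hμ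
  · exact sum_nonneg fun s _ => (hπ μ hμ).1 s
  obtain ⟨hp0, hp1, hp⟩ := hπ μ hμ
  have hM0 : 0 ≤ ∑ a ∈ A, π μ a := sum_nonneg fun a _ => hp0 a
  have hM1 : ∑ a ∈ A, π μ a ≤ 1 := hp1 ▸ sum_le_univ_sum_of_nonneg hp0
  rw [sum_compl_eq_of_hitting_time hη hp hA hh]
  calc μ * h η * ∑ a ∈ A, π μ a ≤ μ * |h η| * ∑ a ∈ A, π μ a := by
        gcongr
        · exact hμ.1.le
        · exact le_abs_self _
    _ ≤ μ * |h η| := mul_le_of_le_one_right (mul_nonneg hμ.1.le (abs_nonneg _)) hM1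

lemma tendsto_sum_absorbing (hP : P ∈ rowStochastic ℝ S)
    (hreach : ∀ s ∉ A, ∃ a ∈ A, ∃ n, 0 < (P ^ n) s a) (hη : η ∉ A)
    (hπ : ∀ μ ∈ Set.Ioo (0 : ℝ) 1, IsStationaryDistribution (amendedMatrix P A η μ) (π μ)) :
    Tendsto (fun μ => ∑ a ∈ A, π μ a) (𝓝[>] 0) (𝓝 1) := by
  have h := (tendsto_sum_compl hP hreach hη hπ).const_sub 1
  rw [sub_zero] at h
  refine h.congr' ?_
  filter_upwards [Ioo_mem_nhdsGT one_pos] with μ hμ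
  rw [← (hπ μ hμ).2.1, ← sum_add_sum_compl A, add_sub_cancel_right]

lemma tendsto_apply_of_notMem (hP : P ∈ rowStochastic ℝ S)
    (hreach : ∀ s ∉ A, ∃ a ∈ A, ∃ n, 0 < (P ^ n) s a) (hη : η ∉ A)
    (hπ : ∀ μ ∈ Set.Ioo (0 : ℝ) 1, IsStationaryDistribution (amendedMatrix P A η μ) (π μ))
    {s : S} (hs : s ∉ A) :
    Tendsto (fun μ => π μ s) (𝓝[>] 0) (𝓝 0) := by
  refine squeeze_zero' ?_ ?_ (tendsto_sum_compl hP hreach hη hπ) <;>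
    filter_upwards [Ioo_mem_nhdsGT one_pos] with μ hμ
  · exact (hπ μ hμ).1 s
  · exact single_le_sum (fun t _ => (hπ μ hμ).1 t) (mem_compl.2 hs)

lemma tendsto_apply_of_mem (hP : P ∈ rowStochastic ℝ S)
    (hreach : ∀ s ∉ A, ∃ a ∈ A, ∃ n, 0 < (P ^ n) s a) (hη : η ∉ A)
    (hπ : ∀ μ ∈ Set.Ioo (0 : ℝ) 1, IsStationaryDistribution (amendedMatrix P A η μ) (π μ))
    {a : S} (ha : a ∈ A) {ρ : S → ℝ} (hρA : ∀ b ∈ A, ρ b = if b = a then 1 else 0)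
    (hρ : ∀ s ∉ A, ρ s = (P *ᵥ ρ) s) :
    Tendsto (fun μ => π μ a) (𝓝[>] 0) (𝓝 (ρ η)) := by
  have h := (tendsto_sum_absorbing hP hreach hη hπ).const_mul (ρ η)
  rw [mul_one] at h
  refine h.congr' ?_
  filter_upwards [Ioo_mem_nhdsGT one_pos] with μ hμ
  rw [← sum_mul_eq_of_harmonic hη hμ.1.ne' (hπ μ hμ).2.2 hρ,
    sum_congr rfl fun b hb => by rw [hρA b hb, mul_ite, mul_one, mul_zero], sum_ite_eq' A a,
    if_pos ha]

end Limit

end MarkovChain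

lemma ite_eq_ite_mem_insert {ι α : Type*} [DecidableEq ι] [Zero α] (f : ι → α) (a b c d s : ι) :
    (if s = a then f a else if s = b then f b else if s = c then f c else if s = d then f d
      else 0) = if s ∈ ({a, b, c, d} : Finset ι) then f s else 0 := by
  split_ifs <;> simp_all

theorem amended_stationary_tendsto_fixation_probabilities_general
    {S : Type*} [Fintype S] [DecidableEq S]
    (P : Matrix S S ℝ)
    (hP0 : ∀ s t, 0 ≤ P s t) (hP1 : ∀ s, ∑ t, P s t = 1)
    (CC CD DC DD : S) (A : Finset S) (hA : A = {CC, CD, DC, DD})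
    (hreach : ∀ s, s ∉ A → ∀ a ∈ A, ∃ n : ℕ, 0 < (P ^ n) s a)
    (η : S) (hη : η ∉ A)
    -- ρ a s is the probability of absorption in `a` starting from `s`,
    -- characterized by its boundary values and harmonicity
    (ρ : S → S → ℝ)
    (hρbd : ∀ a ∈ A, ∀ a' ∈ A, ρ a a' = if a' = a then 1 else 0)
    (hρh : ∀ a ∈ A, ∀ s, s ∉ A → ρ a s = ∑ t, P s t * ρ a t)
    -- π μ is a stationary distribution of the amended chain with mutation rate μ
    (π : ℝ → S → ℝ)
    (hπ : ∀ μ ∈ Set.Ioo (0 : ℝ) 1,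
      (∀ s, 0 ≤ π μ s) ∧ (∑ s, π μ s = 1) ∧
      (∀ t, ∑ s, π μ s *
        (if s ∈ A then (if t = η then μ else if t = s then 1 - μ else 0) else P s t)
        = π μ t)) :
    ∀ s : S, Filter.Tendsto (fun μ => π μ s) (nhdsWithin 0 (Set.Ioi 0))
      (nhds (if s = CC then ρ CC η else if s = CD then ρ CD η
        else if s = DC then ρ DC η else if s = DD then ρ DD η else 0)) := by
  have hP : P ∈ rowStochastic ℝ S := mem_rowStochastic_iff_sum.2 ⟨hP0, hP1⟩
  have hCC : CC ∈ A := by simp [hA]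
  have hreach' : ∀ s ∉ A, ∃ a ∈ A, ∃ n, 0 < (P ^ n) s a :=
    fun s hs => ⟨CC, hCC, hreach s hs CC hCC⟩
  have hstat : ∀ μ ∈ Set.Ioo (0 : ℝ) 1,
      IsStationaryDistribution (amendedMatrix P A η μ) (π μ) :=
    fun μ hμ => ⟨(hπ μ hμ).1, (hπ μ hμ).2.1, funext (hπ μ hμ).2.2⟩
  intro s
  have hvalue := ite_eq_ite_mem_insert (fun x => ρ x η) CC CD DC DD s
  beta_reduce at hvalue
  rw [hvalue, ← hA]
  split_ifs with hs
  · exact tendsto_apply_of_mem hP hreach' hη hstat hs (hρbd s hs) (hρh s hs)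
  · exact tendsto_apply_of_notMem hP hreach' hη hstat hs

/-- As the mutation rate `μ → 0⁺`, the stationary distribution of the
amended chain `P^{ame(η)}` converges, at each state, to the corresponding fixation
(absorption) probability of the original chain started at `η` — at the four
absorbing monomorphic states — and to `0` at every other state. -/
theorem amended_stationary_tendsto_fixation_probabilities
    {S : Type*} [Fintype S] [DecidableEq S]
    (P : Matrix S S ℝ)
    (hP0 : ∀ s t, 0 ≤ P s t) (hP1 : ∀ s, ∑ t, P s t = 1)
    (CC CD DC DD : S) (A : Finset S) (hA : A = {CC, CD, DC, DD}) (hcard : A.card = 4)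
    (habs : ∀ a ∈ A, ∀ t, P a t = if t = a then 1 else 0)
    (hreach : ∀ s, s ∉ A → ∀ a ∈ A, ∃ n : ℕ, 0 < (P ^ n) s a)
    (η : S) (hη : η ∉ A)
    -- ρ a s is the probability of absorption in `a` starting from `s`,
    -- characterized by its boundary values and harmonicity
    (ρ : S → S → ℝ)
    (hρbd : ∀ a ∈ A, ∀ a' ∈ A, ρ a a' = if a' = a then 1 else 0)
    (hρh : ∀ a ∈ A, ∀ s, s ∉ A → ρ a s = ∑ t, P s t * ρ a t)
    -- π μ is a stationary distribution of the amended chain with mutation rate μ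
    (π : ℝ → S → ℝ)
    (hπ : ∀ μ ∈ Set.Ioo (0 : ℝ) 1,
      (∀ s, 0 ≤ π μ s) ∧ (∑ s, π μ s = 1) ∧
      (∀ t, ∑ s, π μ s *
        (if s ∈ A then (if t = η then μ else if t = s then 1 - μ else 0) else P s t)
        = π μ t)) :
    ∀ s : S, Filter.Tendsto (fun μ => π μ s) (nhdsWithin 0 (Set.Ioi 0))
      (nhds (if s = CC then ρ CC η else if s = CD then ρ CD η
        else if s = DC then ρ DC η else if s = DD then ρ DD η else 0)) :=
  amended_stationary_tendsto_fixation_probabilities_general P hP0 hP1 CC CD DC DD A hA hreach η hη ρ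
    hρbd hρh π hπ
end

section
/- Balance identity for the amended chain: if π is the stationary distribution of the amended chain P^{ame(η)} and Ω̂₁(s) denotes the expected one-step change in RV-weighted cooperator frequency in layer 1 from state s under the original dynamics, then 0 = E_π[Ω̂₁] + μ(η̂₁ − 1)(π(C×C) + π(C×D)) + μ η̂₁ (π(D×C) + π(D×D)), where η̂₁ = ∑_i v_i η_i is the RV-weighted layer-1 frequency of the restart state η. -/
/-!
Under a stationary distribution `π` of any chain `M`, the expected one-step change of an
observable `f` vanishes: `π ⬝ᵥ (M *ᵥ f - f) = (π ᵥ* M) ⬝ᵥ f - π ⬝ᵥ f = 0`. For the amended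
chain this drift equals the drift of the original chain away from the absorbing set `A`, and
the restart drift `μ (f η - f a)` at each `a ∈ A`, where the original drift is zero. With
`f = ŝ₁`, which is `1` at `C×C`, `C×D` and `0` at `D×C`, `D×D`, this is the identity.
-/

open Matrix Finset

namespace Matrix

variable {σ : Type*} [Fintype σ]

theorem dotProduct_mulVec_sub_self_eq_zero {M : Matrix σ σ ℝ} {π : σ → ℝ} (hπ : π ᵥ* M = π)
    (f : σ → ℝ) : π ⬝ᵥ (M *ᵥ f - f) = 0 := by
  rw [dotProduct_sub, dotProduct_mulVec, hπ, sub_self]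

theorem sum_mul_sub_eq_mulVec_sub {P : Matrix σ σ ℝ} {s : σ} (hs : ∑ t, P s t = 1)
    (f : σ → ℝ) : ∑ t, P s t * (f t - f s) = (P *ᵥ f) s - f s := by
  simp only [mul_sub, sum_sub_distrib, ← sum_mul, hs, one_mul]
  rfl

variable [DecidableEq σ]

/-- The amended chain `P^{ame(η)}`. -/
def amend (P : Matrix σ σ ℝ) (A : Finset σ) (η : σ) (μ : ℝ) : Matrix σ σ ℝ :=
  fun s t => if s ∈ A then (if t = η then μ else if t = s then 1 - μ else 0) else P s t

theorem amend_mulVec_of_mem (P : Matrix σ σ ℝ) {A : Finset σ} {η s : σ} (μ : ℝ)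
    (hs : s ∈ A) (hsη : s ≠ η) (f : σ → ℝ) :
    (amend P A η μ *ᵥ f) s = μ * f η + (1 - μ) * f s := by
  have hrow : amend P A η μ s = Pi.single η μ + Pi.single s (1 - μ) := by
    ext t
    by_cases htη : t = η
    · subst htη; simp [amend, hs, hsη.symm]
    · by_cases hts : t = s
      · subst hts; simp [amend, hs, htη]
      · simp [amend, hs, htη, hts]
  simp only [mulVec, hrow, add_dotProduct, single_dotProduct]

theorem amend_mulVec_of_notMem (P : Matrix σ σ ℝ) {A : Finset σ} (η : σ) (μ : ℝ) {s : σ}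
    (hs : s ∉ A) (f : σ → ℝ) : (amend P A η μ *ᵥ f) s = (P *ᵥ f) s := by
  simp only [mulVec, amend, hs, if_false]

theorem sum_drift_add_restart_eq_zero_of_vecMul_amend {P : Matrix σ σ ℝ}
    (hP : ∀ s, ∑ t, P s t = 1) {A : Finset σ} (hA : ∀ a ∈ A, ∀ t, P a t = if t = a then 1 else 0)
    {η : σ} (hη : η ∉ A) {μ : ℝ} {π : σ → ℝ} (hπ : π ᵥ* amend P A η μ = π) (f : σ → ℝ) :
    ∑ s, π s * ∑ t, P s t * (f t - f s) + μ * ∑ a ∈ A, π a * (f η - f a) = 0 := by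
  have hdrift : ∀ s, (amend P A η μ *ᵥ f) s - f s
      = ∑ t, P s t * (f t - f s) + if s ∈ A then μ * (f η - f s) else 0 := by
    intro s
    by_cases hs : s ∈ A
    · have habsorbed : ∑ t, P s t * (f t - f s) = 0 := by simp [hA s hs]
      rw [amend_mulVec_of_mem P μ hs (by rintro rfl; exact hη hs), habsorbed, if_pos hs]
      ring
    · rw [amend_mulVec_of_notMem P η μ hs, sum_mul_sub_eq_mulVec_sub (hP s), if_neg hs,
        add_zero]
  have h := dotProduct_mulVec_sub_self_eq_zero hπ f
  simp only [dotProduct, Pi.sub_apply, hdrift, mul_add, mul_ite, mul_zero] at h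
  rw [sum_add_distrib, sum_ite_mem, univ_inter] at h
  rw [← h, mul_sum]
  congr 1
  exact sum_congr rfl fun a _ => by ring

end Matrix

theorem amended_chain_balance_identity_general (N₁ N₂ : ℕ) (hN₂ : 0 < N₂)
    (v : Fin N₁ → ℝ) (hv : ∑ i, v i = 1)
    (P : Matrix ((Fin N₁ → Bool) × (Fin N₂ → Bool)) ((Fin N₁ → Bool) × (Fin N₂ → Bool)) ℝ)
    (hP1 : ∀ s, ∑ t, P s t = 1)
    (CC CD DC DD : (Fin N₁ → Bool) × (Fin N₂ → Bool))
    (hCC : CC = (fun _ => true, fun _ => true)) (hCD : CD = (fun _ => true, fun _ => false))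
    (hDC : DC = (fun _ => false, fun _ => true)) (hDD : DD = (fun _ => false, fun _ => false))
    (A : Finset ((Fin N₁ → Bool) × (Fin N₂ → Bool))) (hA : A = {CC, CD, DC, DD})
    (habs : ∀ a ∈ A, ∀ t, P a t = if t = a then 1 else 0)
    (η : (Fin N₁ → Bool) × (Fin N₂ → Bool)) (hη : η ∉ A)
    (μ : ℝ)
    (shat : (Fin N₁ → Bool) × (Fin N₂ → Bool) → ℝ)
    (hshat : ∀ s, shat s = ∑ i, v i * (if s.1 i then (1 : ℝ) else 0))
    (Pame : Matrix ((Fin N₁ → Bool) × (Fin N₂ → Bool)) ((Fin N₁ → Bool) × (Fin N₂ → Bool)) ℝ)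
    (hPame : ∀ s t, Pame s t =
      if s ∈ A then (if t = η then μ else if t = s then 1 - μ else 0) else P s t)
    (π : (Fin N₁ → Bool) × (Fin N₂ → Bool) → ℝ)
    (hπstat : ∀ t, ∑ s, π s * Pame s t = π t) :
    0 = (∑ s, π s * (∑ t, P s t * (shat t - shat s)))
      + μ * (shat η - 1) * (π CC + π CD)
      + μ * (shat η) * (π DC + π DD) := by
  subst hCC hCD hDC hDD
  have hC : ∀ y : Fin N₂ → Bool, shat (fun _ => true, y) = 1 := fun y => by simp [hshat, hv]
  have hD : ∀ y : Fin N₂ → Bool, shat (fun _ => false, y) = 0 := fun y => by simp [hshat]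
  have hlayer₂ : (fun _ => true : Fin N₂ → Bool) ≠ fun _ => false :=
    fun h => by simpa using congrFun h ⟨0, hN₂⟩
  have hlayer₁ : ∀ y y' : Fin N₂ → Bool, ((fun _ => true, y) : _ × _) ≠ (fun _ => false, y') :=
    fun y y' h => by simpa [hC, hD] using congrArg shat h
  have hame : amend P A η μ = Pame := by ext s t; rw [hPame]; rfl
  have hbalance := sum_drift_add_restart_eq_zero_of_vecMul_amend hP1 habs hη
    (by ext t; rw [hame]; exact hπstat t) shat
  rw [hA, sum_insert (by simp [hlayer₁, hlayer₂]), sum_insert (by simp [hlayer₁]),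
    sum_insert (by simpa using hlayer₂), sum_singleton, hC, hC, hD, hD] at hbalance
  linear_combination -hbalance

/-- Balance identity for the amended chain. If `π` is a stationary
distribution of the amended chain `P^{ame(η)}` (restart at `η` with probability
`μ` from the four monomorphic states), then
`0 = E_π[Ω̂₁] + μ(η̂₁ − 1)(π(C×C) + π(C×D)) + μ η̂₁ (π(D×C) + π(D×D))`,
where `Ω̂₁(s)` is the expected one-step change of the RV-weighted layer-1
cooperator frequency `ŝ₁ = ∑ i, v i * s_{i(1)}` under the original chain. -/
theorem amended_chain_balance_identity (N₁ N₂ : ℕ) (hN₁ : 0 < N₁) (hN₂ : 0 < N₂)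
    (v : Fin N₁ → ℝ) (hv : ∑ i, v i = 1)
    (P : Matrix ((Fin N₁ → Bool) × (Fin N₂ → Bool)) ((Fin N₁ → Bool) × (Fin N₂ → Bool)) ℝ)
    (hP0 : ∀ s t, 0 ≤ P s t) (hP1 : ∀ s, ∑ t, P s t = 1)
    (CC CD DC DD : (Fin N₁ → Bool) × (Fin N₂ → Bool))
    (hCC : CC = (fun _ => true, fun _ => true)) (hCD : CD = (fun _ => true, fun _ => false))
    (hDC : DC = (fun _ => false, fun _ => true)) (hDD : DD = (fun _ => false, fun _ => false))
    (A : Finset ((Fin N₁ → Bool) × (Fin N₂ → Bool))) (hA : A = {CC, CD, DC, DD})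
    (habs : ∀ a ∈ A, ∀ t, P a t = if t = a then 1 else 0)
    (η : (Fin N₁ → Bool) × (Fin N₂ → Bool)) (hη : η ∉ A)
    (μ : ℝ) (hμ : μ ∈ Set.Ioo (0 : ℝ) 1)
    (shat : (Fin N₁ → Bool) × (Fin N₂ → Bool) → ℝ)
    (hshat : ∀ s, shat s = ∑ i, v i * (if s.1 i then (1 : ℝ) else 0))
    (Pame : Matrix ((Fin N₁ → Bool) × (Fin N₂ → Bool)) ((Fin N₁ → Bool) × (Fin N₂ → Bool)) ℝ)
    (hPame : ∀ s t, Pame s t =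
      if s ∈ A then (if t = η then μ else if t = s then 1 - μ else 0) else P s t)
    (π : (Fin N₁ → Bool) × (Fin N₂ → Bool) → ℝ)
    (hπ0 : ∀ s, 0 ≤ π s) (hπ1 : ∑ s, π s = 1)
    (hπstat : ∀ t, ∑ s, π s * Pame s t = π t) :
    0 = (∑ s, π s * (∑ t, P s t * (shat t - shat s)))
      + μ * (shat η - 1) * (π CC + π CD)
      + μ * (shat η) * (π DC + π DD) :=
  amended_chain_balance_identity_general N₁ N₂ hN₂ v hv P hP1 CC CD DC DD hCC hCD hDC hDD A hA habs
    η hη μ shat hshat Pame hPame π hπstat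
end

section
/- Taking the limit μ → 0 in the balance identity yields the fixation-probability formula: ρ_{C×C}(η) + ρ_{C×D}(η) = η̂₁ + ⟨Ω̂₁⟩_η, where ⟨Ω̂₁⟩_η := ∑_{s transient} t_η(s) Ω̂₁(s) is the sojourn-time-weighted total expected change in RV-weighted layer-1 cooperator frequency. -/
/-!
Green's identity for the absorbing chain: summing the one-step drift `P h - h` of any function
`h` against the sojourn times `t` telescopes to `∑_{a ∈ A} (t P)(a) h(a) - h(η)`, where `(t P)(a)`
is the probability of absorption at `a`. A function harmonic off `A` is therefore the
`(t P)`-average of its boundary values. Now `ρ_CC + ρ_CD` is harmonic and agrees with `ŝ₁` on the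
four absorbing states, which gives the formula.
-/

open Finset Matrix

section Absorption

variable {S : Type*} [Fintype S] [DecidableEq S] {P : Matrix S S ℝ} {A : Finset S} {η : S}
  {t : S → ℝ}

theorem sum_compl_mul_mulVec_eq_of_sojourn (ht_abs : ∀ s ∈ A, t s = 0)
    (ht_start : t η = 1 + (t ᵥ* P) η) (ht_other : ∀ s ∉ A, s ≠ η → t s = (t ᵥ* P) s)
    (hη : η ∉ A) (h : S → ℝ) :
    ∑ s ∈ Aᶜ, t s * (P *ᵥ h) s = ∑ a ∈ A, (t ᵥ* P) a * h a + ∑ s ∈ Aᶜ, t s * h s - h η := by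
  have h_visits : ∀ s ∈ Aᶜ, (t ᵥ* P) s * h s = t s * h s - if s = η then h s else 0 := by
    intro s hs
    by_cases hsη : s = η
    · subst hsη; rw [if_pos rfl, ht_start]; ring
    · rw [if_neg hsη, ht_other s (mem_compl.1 hs) hsη, sub_zero]
  calc ∑ s ∈ Aᶜ, t s * (P *ᵥ h) s = t ⬝ᵥ (P *ᵥ h) := by
        rw [dotProduct, ← sum_compl_add_sum A,
          sum_eq_zero (s := A) fun s hs => by rw [ht_abs s hs, zero_mul], add_zero]
    _ = ∑ a ∈ A, (t ᵥ* P) a * h a + ∑ s ∈ Aᶜ, (t ᵥ* P) s * h s := by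
        rw [dotProduct_mulVec, dotProduct, sum_add_sum_compl]
    _ = _ := by
        rw [sum_congr rfl h_visits, sum_sub_distrib, sum_ite_eq', if_pos (mem_compl.2 hη)]
        ring

theorem eq_sum_vecMul_mul_of_harmonic (ht_abs : ∀ s ∈ A, t s = 0)
    (ht_start : t η = 1 + (t ᵥ* P) η) (ht_other : ∀ s ∉ A, s ≠ η → t s = (t ᵥ* P) s)
    (hη : η ∉ A) {f : S → ℝ} (hf : ∀ s ∉ A, f s = (P *ᵥ f) s) :
    f η = ∑ a ∈ A, (t ᵥ* P) a * f a := by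
  have h := sum_compl_mul_mulVec_eq_of_sojourn ht_abs ht_start ht_other hη f
  rw [sum_congr rfl fun s hs => by rw [← hf s (mem_compl.1 hs)]] at h
  linarith

theorem harmonic_eq_add_sum_sojourn_mul_drift (hP : ∀ s, ∑ u, P s u = 1)
    (ht_abs : ∀ s ∈ A, t s = 0)
    (ht_start : t η = 1 + (t ᵥ* P) η) (ht_other : ∀ s ∉ A, s ≠ η → t s = (t ᵥ* P) s)
    (hη : η ∉ A) {f h : S → ℝ} (hf : ∀ s ∉ A, f s = (P *ᵥ f) s) (hfh : ∀ a ∈ A, f a = h a) :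
    f η = h η + ∑ s ∈ Aᶜ, t s * ∑ u, P s u * (h u - h s) := by
  have h_drift : ∀ s, ∑ u, P s u * (h u - h s) = (P *ᵥ h) s - h s := fun s => by
    simp only [mulVec, dotProduct, mul_sub, sum_sub_distrib, ← sum_mul, hP, one_mul]
  rw [eq_sum_vecMul_mul_of_harmonic ht_abs ht_start ht_other hη hf,
    sum_congr rfl fun a ha => by rw [hfh a ha]]
  simp_rw [h_drift, mul_sub, sum_sub_distrib]
  rw [sum_compl_mul_mulVec_eq_of_sojourn ht_abs ht_start ht_other hη h]
  ring

end Absorption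

theorem fixation_probability_formula_general (N₁ N₂ : ℕ) (hN₂ : 0 < N₂)
    (v : Fin N₁ → ℝ) (hv : ∑ i, v i = 1)
    (P : Matrix ((Fin N₁ → Bool) × (Fin N₂ → Bool)) ((Fin N₁ → Bool) × (Fin N₂ → Bool)) ℝ)
    (hP1 : ∀ s, ∑ t, P s t = 1)
    (CC CD DC DD : (Fin N₁ → Bool) × (Fin N₂ → Bool))
    (hCC : CC = (fun _ => true, fun _ => true)) (hCD : CD = (fun _ => true, fun _ => false))
    (hDC : DC = (fun _ => false, fun _ => true)) (hDD : DD = (fun _ => false, fun _ => false))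
    (A : Finset ((Fin N₁ → Bool) × (Fin N₂ → Bool))) (hA : A = {CC, CD, DC, DD})
    (η : (Fin N₁ → Bool) × (Fin N₂ → Bool)) (hη : η ∉ A)
    (shat : (Fin N₁ → Bool) × (Fin N₂ → Bool) → ℝ)
    (hshat : ∀ s, shat s = ∑ i, v i * (if s.1 i then (1 : ℝ) else 0))
    -- absorption probabilities, characterized by boundary values and harmonicity
    (ρCC ρCD : (Fin N₁ → Bool) × (Fin N₂ → Bool) → ℝ)
    (hρCCbd : ∀ a ∈ A, ρCC a = if a = CC then 1 else 0)
    (hρCDbd : ∀ a ∈ A, ρCD a = if a = CD then 1 else 0)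
    (hρCCh : ∀ s, s ∉ A → ρCC s = ∑ t, P s t * ρCC t)
    (hρCDh : ∀ s, s ∉ A → ρCD s = ∑ t, P s t * ρCD t)
    -- sojourn times starting from η
    (tη : (Fin N₁ → Bool) × (Fin N₂ → Bool) → ℝ)
    (htabs : ∀ s ∈ A, tη s = 0)
    (htη : tη η = 1 + ∑ y, tη y * P y η)
    (htother : ∀ s, s ∉ A → s ≠ η → tη s = ∑ y, tη y * P y s) :
    ρCC η + ρCD η = shat η
      + ∑ s ∈ Finset.univ.filter (fun s => s ∉ A),
          tη s * (∑ t, P s t * (shat t - shat s)) := by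
  have hCC_one : shat CC = 1 := by simp [hshat, hCC, hv]
  have hCD_one : shat CD = 1 := by simp [hshat, hCD, hv]
  have hDC_zero : shat DC = 0 := by simp [hshat, hDC]
  have hDD_zero : shat DD = 0 := by simp [hshat, hDD]
  have hCC_ne_CD : CC ≠ CD := by
    rw [hCC, hCD]
    simpa [funext_iff] using ⟨⟨0, hN₂⟩⟩
  have h_boundary_of_shat_zero : ∀ a, shat a = 0 →
      (if a = CC then 1 else 0) + (if a = CD then 1 else 0) = shat a := by
    intro a ha
    rw [if_neg (by rintro rfl; linarith), if_neg (by rintro rfl; linarith), ha, add_zero]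
  have h_boundary : ∀ a ∈ A, (ρCC + ρCD) a = shat a := by
    intro a ha
    rw [Pi.add_apply, hρCCbd a ha, hρCDbd a ha]
    simp only [hA, mem_insert, mem_singleton] at ha
    rcases ha with rfl | rfl | rfl | rfl
    · rw [if_pos rfl, if_neg hCC_ne_CD, hCC_one, add_zero]
    · rw [if_neg hCC_ne_CD.symm, if_pos rfl, hCD_one, zero_add]
    · exact h_boundary_of_shat_zero _ hDC_zero
    · exact h_boundary_of_shat_zero _ hDD_zero
  have h_harmonic : ∀ s ∉ A, (ρCC + ρCD) s = (P *ᵥ (ρCC + ρCD)) s := fun s hs => by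
    rw [mulVec_add, Pi.add_apply, Pi.add_apply, hρCCh s hs, hρCDh s hs]
    rfl
  have h_compl : Finset.univ.filter (fun s => s ∉ A) = Aᶜ := by ext; simp
  rw [h_compl]
  exact harmonic_eq_add_sum_sojourn_mul_drift hP1 htabs htη htother hη h_harmonic h_boundary

/-- Fixation-probability formula from the μ → 0 limit of the balance
identity: `ρ_{C×C}(η) + ρ_{C×D}(η) = η̂₁ + ⟨Ω̂₁⟩_η`, where
`⟨Ω̂₁⟩_η = ∑_{s transient} t_η(s) Ω̂₁(s)` is the sojourn-time-weighted total
expected change of the RV-weighted layer-1 cooperator frequency. -/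
theorem fixation_probability_formula (N₁ N₂ : ℕ) (hN₁ : 0 < N₁) (hN₂ : 0 < N₂)
    (v : Fin N₁ → ℝ) (hv : ∑ i, v i = 1)
    (P : Matrix ((Fin N₁ → Bool) × (Fin N₂ → Bool)) ((Fin N₁ → Bool) × (Fin N₂ → Bool)) ℝ)
    (hP0 : ∀ s t, 0 ≤ P s t) (hP1 : ∀ s, ∑ t, P s t = 1)
    (CC CD DC DD : (Fin N₁ → Bool) × (Fin N₂ → Bool))
    (hCC : CC = (fun _ => true, fun _ => true)) (hCD : CD = (fun _ => true, fun _ => false))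
    (hDC : DC = (fun _ => false, fun _ => true)) (hDD : DD = (fun _ => false, fun _ => false))
    (A : Finset ((Fin N₁ → Bool) × (Fin N₂ → Bool))) (hA : A = {CC, CD, DC, DD})
    (habs : ∀ a ∈ A, ∀ t, P a t = if t = a then 1 else 0)
    (hreach : ∀ s, s ∉ A → ∀ a ∈ A, ∃ n : ℕ, 0 < (P ^ n) s a)
    (η : (Fin N₁ → Bool) × (Fin N₂ → Bool)) (hη : η ∉ A)
    (shat : (Fin N₁ → Bool) × (Fin N₂ → Bool) → ℝ)
    (hshat : ∀ s, shat s = ∑ i, v i * (if s.1 i then (1 : ℝ) else 0))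
    -- absorption probabilities, characterized by boundary values and harmonicity
    (ρCC ρCD : (Fin N₁ → Bool) × (Fin N₂ → Bool) → ℝ)
    (hρCCbd : ∀ a ∈ A, ρCC a = if a = CC then 1 else 0)
    (hρCDbd : ∀ a ∈ A, ρCD a = if a = CD then 1 else 0)
    (hρCCh : ∀ s, s ∉ A → ρCC s = ∑ t, P s t * ρCC t)
    (hρCDh : ∀ s, s ∉ A → ρCD s = ∑ t, P s t * ρCD t)
    -- sojourn times starting from η
    (tη : (Fin N₁ → Bool) × (Fin N₂ → Bool) → ℝ)
    (htabs : ∀ s ∈ A, tη s = 0)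
    (htη : tη η = 1 + ∑ y, tη y * P y η)
    (htother : ∀ s, s ∉ A → s ≠ η → tη s = ∑ y, tη y * P y s) :
    ρCC η + ρCD η = shat η
      + ∑ s ∈ Finset.univ.filter (fun s => s ∉ A),
          tη s * (∑ t, P s t * (shat t - shat s)) :=
  fixation_probability_formula_general N₁ N₂ hN₂ v hv P hP1 CC CD DC DD hCC hCD hDC hDD A hA η hη
    shat hshat ρCC ρCD hρCCbd hρCDbd hρCCh hρCDh tη htabs htη htother
end

section
/- The recursion for pairwise coalescence-type quantities ψ has a unique solution: given a stochastic matrix p on Fin N (p_{ik} ≥ 0, ∑_k p_{ik} = 1) and given constants g_{ij} ∈ ℝ with g_{ii} = 0 and also requiring ψ_{ii} = 0 as boundary condition, the system ψ_{ij} = g_{ij} + (1/2) ∑_k ( p_{ik} ψ_{kj} + p_{jk} ψ_{ik} ) for all i ≠ j, ψ_{ii} = 0, has at most one solution ψ : Fin N × Fin N → ℝ, provided the random walk given by p is irreducible (two independent lazy walkers meet with probability 1). -/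
/-!
The difference of two solutions is harmonic, off the diagonal, for the chain that moves one of
two walkers by `p` (each with probability `1/2`), and vanishes on the diagonal. At a pair where
such a function attains its maximum, the maximum is inherited by every `p`-successor of the
first walker; by irreducibility the first walker reaches the second, i.e. the diagonal, so the
maximum is `0`. The same applied to the negated difference gives the result.
-/

open Finset Relation

variable {ι : Type*} [Fintype ι]

noncomputable def twoWalkerMean (p : ι → ι → ℝ) (φ : ι → ι → ℝ) (i j : ι) : ℝ :=
  (1 / 2) * ∑ k, (p i k * φ k j + p j k * φ i k)

lemma twoWalkerMean_sub (p φ φ' : ι → ι → ℝ) (i j : ι) :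
    twoWalkerMean p (φ - φ') i j = twoWalkerMean p φ i j - twoWalkerMean p φ' i j := by
  simp only [twoWalkerMean, Pi.sub_apply, ← mul_sub, ← sum_sub_distrib]
  congr 1
  exact sum_congr rfl fun k _ => by ring

lemma eq_of_weighted_sum_eq_of_le {w f : ι → ℝ} {M : ℝ} (hw0 : ∀ k, 0 ≤ w k)
    (hw1 : ∑ k, w k = 1) (hf : ∀ k, f k ≤ M) (hsum : ∑ k, w k * f k = M) {k : ι}
    (hk : 0 < w k) : f k = M := by
  have hgap : ∑ k, w k * (M - f k) = 0 := by
    simp only [mul_sub, sum_sub_distrib, ← sum_mul, hw1, hsum, one_mul, sub_self]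
  have hterm := (sum_eq_zero_iff_of_nonneg fun k _ =>
    mul_nonneg (hw0 k) (sub_nonneg.2 (hf k))).1 hgap k (mem_univ k)
  linarith [(mul_eq_zero.1 hterm).resolve_left hk.ne']

section MaximumPrinciple

variable {p φ : ι → ι → ℝ} {M : ℝ}

lemma twoWalker_max_of_step (hp0 : ∀ i k, 0 ≤ p i k) (hp1 : ∀ i, ∑ k, p i k = 1)
    (hle : ∀ i j, φ i j ≤ M) {a b : ι} (hmean : φ a b = twoWalkerMean p φ a b)
    (hmax : φ a b = M) {k : ι} (hk : 0 < p a k) : φ k b = M := by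
  have hfirst : ∑ k, p a k * φ k b ≤ M :=
    (sum_le_sum fun k _ => mul_le_mul_of_nonneg_left (hle k b) (hp0 a k)).trans_eq
      (by rw [← sum_mul, hp1, one_mul])
  have hsecond : ∑ k, p b k * φ a k ≤ M :=
    (sum_le_sum fun k _ => mul_le_mul_of_nonneg_left (hle a k) (hp0 b k)).trans_eq
      (by rw [← sum_mul, hp1, one_mul])
  have hsplit : twoWalkerMean p φ a b
      = (1 / 2) * (∑ k, p a k * φ k b + ∑ k, p b k * φ a k) := by
    rw [twoWalkerMean, sum_add_distrib]
  exact eq_of_weighted_sum_eq_of_le (hp0 a) (hp1 a) (fun k => hle k b) (by linarith) hk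

lemma twoWalker_max_of_reflTransGen (hp0 : ∀ i k, 0 ≤ p i k) (hp1 : ∀ i, ∑ k, p i k = 1)
    (hharm : ∀ i j, i ≠ j → φ i j = twoWalkerMean p φ i j) (hle : ∀ i j, φ i j ≤ M)
    {a b : ι} (hpath : ReflTransGen (fun x y => 0 < p x y) a b) (hmax : φ a b = M) :
    φ b b = M := by
  induction hpath using ReflTransGen.head_induction_on with
  | refl => exact hmax
  | @head a c hstep _ ih =>
    by_cases hab : a = b
    · subst hab; exact hmax
    · exact ih (twoWalker_max_of_step hp0 hp1 hle (hharm a b hab) hmax hstep)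

theorem twoWalker_harmonic_nonpos (hp0 : ∀ i k, 0 ≤ p i k) (hp1 : ∀ i, ∑ k, p i k = 1)
    (hirr : ∀ i j, ReflTransGen (fun a b => 0 < p a b) i j) (hdiag : ∀ i, φ i i = 0)
    (hharm : ∀ i j, i ≠ j → φ i j = twoWalkerMean p φ i j) (i j : ι) : φ i j ≤ 0 := by
  have : Nonempty (ι × ι) := ⟨(i, j)⟩
  obtain ⟨⟨a, b⟩, hmax⟩ := Finite.exists_max fun q : ι × ι => φ q.1 q.2
  have hle : ∀ i j, φ i j ≤ φ a b := fun i j => hmax (i, j)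
  calc φ i j ≤ φ a b := hle i j
    _ = φ b b := (twoWalker_max_of_reflTransGen hp0 hp1 hharm hle (hirr a b) rfl).symm
    _ = 0 := hdiag b

end MaximumPrinciple

lemma twoWalkerMean_harmonic_sub {p g ψ ψ' : ι → ι → ℝ}
    (hψ : ∀ i j, i ≠ j → ψ i j = g i j + twoWalkerMean p ψ i j)
    (hψ' : ∀ i j, i ≠ j → ψ' i j = g i j + twoWalkerMean p ψ' i j) :
    ∀ i j, i ≠ j → (ψ - ψ') i j = twoWalkerMean p (ψ - ψ') i j := by
  intro i j hij
  rw [twoWalkerMean_sub, Pi.sub_apply, Pi.sub_apply, hψ i j hij, hψ' i j hij]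
  ring

theorem pairwise_recursion_unique_general (N : ℕ)
    (p : Fin N → Fin N → ℝ)
    (hp0 : ∀ i k, 0 ≤ p i k) (hp1 : ∀ i, ∑ k, p i k = 1)
    (hirr : ∀ i j : Fin N, Relation.ReflTransGen (fun a b => 0 < p a b) i j)
    (g : Fin N → Fin N → ℝ)
    (ψ ψ' : Fin N → Fin N → ℝ)
    (hψd : ∀ i, ψ i i = 0) (hψ'd : ∀ i, ψ' i i = 0)
    (hψ : ∀ i j, i ≠ j →
      ψ i j = g i j + (1 / 2) * ∑ k, (p i k * ψ k j + p j k * ψ i k))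
    (hψ' : ∀ i j, i ≠ j →
      ψ' i j = g i j + (1 / 2) * ∑ k, (p i k * ψ' k j + p j k * ψ' i k)) :
    ψ = ψ' := by
  have hdiag : ∀ i, (ψ - ψ') i i = 0 := fun i => by simp [hψd, hψ'd]
  have hdiag' : ∀ i, (ψ' - ψ) i i = 0 := fun i => by simp [hψd, hψ'd]
  have hle := twoWalker_harmonic_nonpos hp0 hp1 hirr hdiag (twoWalkerMean_harmonic_sub hψ hψ')
  have hge := twoWalker_harmonic_nonpos hp0 hp1 hirr hdiag' (twoWalkerMean_harmonic_sub hψ' hψ)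
  funext i j
  exact le_antisymm (sub_nonpos.1 (hle i j)) (sub_nonpos.1 (hge i j))

/-- Uniqueness for the pairwise coalescence-type recursion: given a
row-stochastic irreducible `p` and constants `g` with `g_{ii} = 0`, the system
`ψ_{ij} = g_{ij} + (1/2) ∑_k (p_{ik} ψ_{kj} + p_{jk} ψ_{ik})` for `i ≠ j`, with
boundary condition `ψ_{ii} = 0`, has at most one solution. -/
theorem pairwise_recursion_unique (N : ℕ)
    (p : Fin N → Fin N → ℝ)
    (hp0 : ∀ i k, 0 ≤ p i k) (hp1 : ∀ i, ∑ k, p i k = 1)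
    (hirr : ∀ i j : Fin N, Relation.ReflTransGen (fun a b => 0 < p a b) i j)
    (g : Fin N → Fin N → ℝ) (hg : ∀ i, g i i = 0)
    (ψ ψ' : Fin N → Fin N → ℝ)
    (hψd : ∀ i, ψ i i = 0) (hψ'd : ∀ i, ψ' i i = 0)
    (hψ : ∀ i j, i ≠ j →
      ψ i j = g i j + (1 / 2) * ∑ k, (p i k * ψ k j + p j k * ψ i k))
    (hψ' : ∀ i j, i ≠ j →
      ψ' i j = g i j + (1 / 2) * ∑ k, (p i k * ψ' k j + p j k * ψ' i k)) :
    ψ = ψ' :=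
  pairwise_recursion_unique_general N p hp0 hp1 hirr g ψ ψ' hψd hψ'd hψ hψ'
end
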